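/- For p, q ∈ ℝ³ set p₀ := √(1 + |p|²), q₀ := √(1 + |q|²) and τ(p,q) := p₀ q₀ − p·q. Then: (i) for all p, q ∈ ℝ³, 0 ≤ τ(p,q) − 1 ≤ (1/2)|p − q|², and τ(p,q) = 1 if and only if p = q; (ii) there exists a universal constant c > 0 such that τ(p,q) − 1 ≥ c |p − q|²/q₀² whenever |p − q| < (|p| + 1)/2, and τ(p,q) − 1 ≥ c · p₀/q₀ whenever |p − q| ≥ (|p| + 1)/2. -/

import Mathlib

open MeasureTheory

/-- Relativistic energy `p₀ = √(1 + |p|²)`. -/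
noncomputable def pZero (p : EuclideanSpace ℝ (Fin 3)) : ℝ := Real.sqrt (1 + ‖p‖ ^ 2)

/-- `τ(p,q) = p₀ q₀ - p·q`, the Lorentz inner product of the energy-momentum 4-vectors. -/
noncomputable def tauLor (p q : EuclideanSpace ℝ (Fin 3)) : ℝ :=
  pZero p * pZero q - (inner ℝ p q : ℝ)

/-!
With `a = |p|`, `b = |q|`, `t = p·q`, the whole argument rests on
`(p₀q₀)² - (1 + t)² = |p - q|² + (a²b² - t²)`, whose last term is nonnegative by Cauchy–Schwarz.
Since `1 + t ≤ 1 + ab ≤ p₀q₀`, this gives `|p - q|² ≤ (τ - 1)(τ + 1 + 2t) ≤ 2 p₀q₀ (τ - 1)`,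
and the upper bound is `2 p₀q₀ ≤ p₀² + q₀²`. In the near regime `p₀ ≤ 4 q₀`, and in the far
regime `p₀ ≤ 1 + |p| ≤ 2|p - q|`; either way the lower bound holds with `c = 1/8`.
-/

section PZero

variable (p : EuclideanSpace ℝ (Fin 3))

lemma pZero_sq : pZero p ^ 2 = 1 + ‖p‖ ^ 2 :=
  Real.sq_sqrt (by positivity)

lemma pZero_nonneg : 0 ≤ pZero p :=
  Real.sqrt_nonneg _

lemma one_le_pZero : 1 ≤ pZero p :=
  Real.one_le_sqrt.mpr (by simp)

lemma pZero_pos : 0 < pZero p :=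
  one_pos.trans_le (one_le_pZero p)

lemma norm_le_pZero : ‖p‖ ≤ pZero p :=
  Real.le_sqrt_of_sq_le (by linarith)

lemma pZero_le_one_add_norm : pZero p ≤ 1 + ‖p‖ :=
  Real.sqrt_le_iff.mpr ⟨by positivity, by nlinarith [norm_nonneg p]⟩

end PZero

section TauLor

variable (p q : EuclideanSpace ℝ (Fin 3))

lemma pZero_mul_pZero_sq : (pZero p * pZero q) ^ 2 = (1 + ‖p‖ ^ 2) * (1 + ‖q‖ ^ 2) := by
  rw [mul_pow, pZero_sq, pZero_sq]

lemma one_add_norm_mul_norm_le_pZero_mul_pZero :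
    1 + ‖p‖ * ‖q‖ ≤ pZero p * pZero q := by
  have h_sq := pZero_mul_pZero_sq p q
  nlinarith [sq_nonneg (‖p‖ - ‖q‖), mul_nonneg (pZero_nonneg p) (pZero_nonneg q)]

lemma inner_add_one_le_pZero_mul_pZero :
    inner ℝ p q + 1 ≤ pZero p * pZero q := by
  linarith [real_inner_le_norm p q, one_add_norm_mul_norm_le_pZero_mul_pZero p q]

lemma one_le_tauLor : 1 ≤ tauLor p q := by
  rw [tauLor]
  linarith [inner_add_one_le_pZero_mul_pZero p q]

lemma tauLor_self : tauLor p p = 1 := by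
  rw [tauLor, ← sq, pZero_sq, real_inner_self_eq_norm_sq]
  ring

lemma tauLor_sub_one_le_half_dist_sq : tauLor p q - 1 ≤ 1 / 2 * dist p q ^ 2 := by
  have h_amgm : 2 * (pZero p * pZero q) ≤ pZero p ^ 2 + pZero q ^ 2 := by
    linarith [two_mul_le_add_sq (pZero p) (pZero q)]
  rw [pZero_sq, pZero_sq] at h_amgm
  rw [tauLor, dist_eq_norm, norm_sub_sq_real]
  linarith

lemma dist_sq_le_two_mul_pZero_mul_pZero_mul_tauLor_sub_one :
    dist p q ^ 2 ≤ 2 * (pZero p * pZero q) * (tauLor p q - 1) := by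
  set t : ℝ := inner ℝ p q
  have h_cs : t ^ 2 ≤ (‖p‖ * ‖q‖) ^ 2 := sq_le_sq.mpr (by simpa using abs_real_inner_le_norm p q)
  have h_dist : dist p q ^ 2 = ‖p‖ ^ 2 - 2 * t + ‖q‖ ^ 2 := by
    rw [dist_eq_norm, norm_sub_sq_real]
  have h_prod := pZero_mul_pZero_sq p q
  have h_tau : tauLor p q - 1 = pZero p * pZero q - (t + 1) := by
    rw [tauLor]; ring
  have h_identity : (pZero p * pZero q - (t + 1)) * (pZero p * pZero q + (t + 1)) =
      dist p q ^ 2 + ((‖p‖ * ‖q‖) ^ 2 - t ^ 2) := by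
    rw [h_dist]; linear_combination h_prod
  have h_factor : dist p q ^ 2 ≤ (tauLor p q - 1) * (pZero p * pZero q + (t + 1)) := by
    rw [h_tau, h_identity]
    linarith
  calc dist p q ^ 2 ≤ (tauLor p q - 1) * (pZero p * pZero q + (t + 1)) := h_factor
    _ ≤ (tauLor p q - 1) * (2 * (pZero p * pZero q)) := by
      gcongr
      · linarith [one_le_tauLor p q]
      · linarith [inner_add_one_le_pZero_mul_pZero p q]
    _ = 2 * (pZero p * pZero q) * (tauLor p q - 1) := by ring

lemma tauLor_eq_one_iff : tauLor p q = 1 ↔ p = q := by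
  refine ⟨fun h => ?_, fun h => h ▸ tauLor_self p⟩
  have h_dist := dist_sq_le_two_mul_pZero_mul_pZero_mul_tauLor_sub_one p q
  rw [h, sub_self, mul_zero] at h_dist
  exact dist_eq_zero.mp (pow_eq_zero_iff two_ne_zero |>.mp (le_antisymm h_dist (sq_nonneg _)))

end TauLor

section Regimes

variable {p q : EuclideanSpace ℝ (Fin 3)}

lemma pZero_le_four_mul_pZero_of_dist_lt (h : dist p q < (‖p‖ + 1) / 2) :
    pZero p ≤ 4 * pZero q := by
  have h_norm : ‖p‖ ≤ ‖q‖ + dist p q := by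
    rw [dist_eq_norm]; linarith [norm_sub_norm_le p q]
  linarith [pZero_le_one_add_norm p, norm_le_pZero q, one_le_pZero q]

lemma pZero_le_two_mul_dist (h : (‖p‖ + 1) / 2 ≤ dist p q) : pZero p ≤ 2 * dist p q := by
  linarith [pZero_le_one_add_norm p]

lemma dist_sq_div_pZero_sq_le_tauLor_sub_one (h : dist p q < (‖p‖ + 1) / 2) :
    1 / 8 * dist p q ^ 2 / pZero q ^ 2 ≤ tauLor p q - 1 := by
  have hq := pZero_pos q
  rw [div_le_iff₀ (by positivity)]
  calc 1 / 8 * dist p q ^ 2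
      ≤ 1 / 8 * (2 * (pZero p * pZero q) * (tauLor p q - 1)) :=
        by gcongr; exact dist_sq_le_two_mul_pZero_mul_pZero_mul_tauLor_sub_one p q
    _ ≤ 1 / 8 * (2 * (4 * pZero q * pZero q) * (tauLor p q - 1)) := by
        gcongr
        · linarith [one_le_tauLor p q]
        · exact pZero_le_four_mul_pZero_of_dist_lt h
    _ = (tauLor p q - 1) * pZero q ^ 2 := by ring

lemma pZero_div_pZero_le_tauLor_sub_one (h : (‖p‖ + 1) / 2 ≤ dist p q) :
    1 / 8 * (pZero p / pZero q) ≤ tauLor p q - 1 := by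
  have hp := pZero_pos p
  have hq := pZero_pos q
  have h_sq : pZero p ^ 2 ≤ 8 * (pZero p * pZero q) * (tauLor p q - 1) := by
    nlinarith [pZero_le_two_mul_dist h, dist_sq_le_two_mul_pZero_mul_pZero_mul_tauLor_sub_one p q]
  rw [← mul_div_assoc, div_le_iff₀ hq]
  nlinarith

end Regimes

/-- Pointwise bounds on `τ(p,q) - 1`:
(i) `0 ≤ τ - 1 ≤ |p - q|²/2` with equality `τ = 1` iff `p = q`;
(ii) for a universal `c > 0`, `τ - 1 ≥ c |p-q|²/q₀²` when `|p-q| < (|p|+1)/2`, and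
`τ - 1 ≥ c p₀/q₀` when `|p-q| ≥ (|p|+1)/2`. -/
theorem tauLor_bounds :
    (∀ p q : EuclideanSpace ℝ (Fin 3),
      0 ≤ tauLor p q - 1 ∧ tauLor p q - 1 ≤ (1 / 2) * dist p q ^ 2 ∧
        (tauLor p q = 1 ↔ p = q)) ∧
    ∃ c : ℝ, 0 < c ∧ ∀ p q : EuclideanSpace ℝ (Fin 3),
      (dist p q < (‖p‖ + 1) / 2 → c * dist p q ^ 2 / pZero q ^ 2 ≤ tauLor p q - 1) ∧
      ((‖p‖ + 1) / 2 ≤ dist p q → c * (pZero p / pZero q) ≤ tauLor p q - 1) :=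
  ⟨fun p q => ⟨sub_nonneg.mpr (one_le_tauLor p q), tauLor_sub_one_le_half_dist_sq p q,
      tauLor_eq_one_iff p q⟩,
    1 / 8, by norm_num, fun _ _ =>
      ⟨dist_sq_div_pZero_sq_le_tauLor_sub_one, pZero_div_pZero_le_tauLor_sub_one⟩⟩
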